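/- arXiv:1708.04572 — 2 statements merged into one kernel-verified Lean document; each statement's English description precedes it below -/
import Mathlib

section
/- Convexity inequality for ∂_t(k∗·): under the assumptions of the fundamental identity, if in addition ψ is convex and u₀ ∈ I (it is not required that u(0) = u₀), then ψ'(u(t)) d/dt (k∗[u - u₀])(t) ≥ d/dt (k∗[ψ(u) - ψ(u₀)])(t) for t ∈ (0,T). -/
open Real Set MeasureTheory intervalIntegral Filter Topology

-- gradient inequality
lemma grad_ineq {I : Set ℝ} {ψ : ℝ → ℝ} (hconv : ConvexOn ℝ I ψ) (hψ : ContDiff ℝ 1 ψ)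
    {x y : ℝ} (hx : x ∈ I) (hy : y ∈ I) :
    ψ x + deriv ψ x * (y - x) ≤ ψ y := by
  have hd : DifferentiableAt ℝ ψ x := (hψ.differentiable one_ne_zero).differentiableAt
  rcases lt_trichotomy x y with h | h | h
  · have := hconv.deriv_le_slope hx hy h hd
    rw [slope_def_field, le_div_iff₀ (by linarith)] at this
    linarith
  · simp [h]
  · have := hconv.slope_le_deriv hy hx h hd
    rw [slope_def_field, div_le_iff₀ (by linarith)] at this
    nlinarith

lemma k_hasDerivAt {k : ℝ → ℝ} (hk1 : ContDiffOn ℝ 1 k (Ioi 0)) {s : ℝ} (hs : 0 < s) :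
    HasDerivAt k (deriv k s) s := by
  have := ((hk1.differentiableOn one_ne_zero) s hs).differentiableAt (isOpen_Ioi.mem_nhds hs)
  exact this.hasDerivAt

lemma deriv_k_nonpos {k : ℝ → ℝ} (hk1 : ContDiffOn ℝ 1 k (Ioi 0))
    (hkmono : AntitoneOn k (Ioi 0)) {s : ℝ} (hs : 0 < s) : deriv k s ≤ 0 := by
  have hd := hasDerivAt_iff_tendsto_slope.1 (k_hasDerivAt hk1 hs)
  have hd' : Tendsto (slope k s) (𝓝[>] s) (𝓝 (deriv k s)) :=
    hd.mono_left (nhdsWithin_mono _ (fun y hy => ne_of_gt hy))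
  refine le_of_tendsto hd' ?_
  filter_upwards [self_mem_nhdsWithin] with y hy
  rw [slope_def_field]
  apply div_nonpos_of_nonpos_of_nonneg
  · have hy' : s < y := mem_Ioi.1 hy
    have := hkmono (mem_Ioi.2 hs) (mem_Ioi.2 (hs.trans hy')) (le_of_lt hy')
    linarith
  · linarith [mem_Ioi.1 hy]

lemma kmul_ii {k : ℝ → ℝ} (hkloc : ∀ a : ℝ, 0 < a → IntegrableOn k (Ioc 0 a))
    {g : ℝ → ℝ} (hg : Continuous g) {a : ℝ} (ha : 0 ≤ a) :
    IntervalIntegrable (fun s => k s * g s) volume 0 a := by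
  rcases eq_or_lt_of_le ha with h | h
  · simp [← h]
  · have hk : IntervalIntegrable k volume 0 a := by
      rw [intervalIntegrable_iff_integrableOn_Ioc_of_le ha]; exact hkloc a h
    exact hk.mul_continuousOn hg.continuousOn

lemma K_tendsto {k : ℝ → ℝ} (hkloc : ∀ a : ℝ, 0 < a → IntegrableOn k (Ioc 0 a)) :
    Tendsto (fun x => ∫ t in Ioc 0 x, k t) (𝓝[>] (0:ℝ)) (𝓝 0) := by
  have hint : IntegrableOn k (Icc 0 1) := (integrableOn_Icc_iff_integrableOn_Ioc (by simp)).2 (hkloc 1 one_pos)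
  have hcont := (continuousOn_primitive (a := 0) (b := 1) (μ := volume) hint)
  have h0 : (0:ℝ) ∈ Icc (0:ℝ) 1 := by constructor <;> norm_num
  have := (hcont 0 h0).tendsto
  simp only [Ioc_self, MeasureTheory.setIntegral_empty] at this
  refine this.mono_left (nhdsWithin_le_of_mem ?_)
  have : Ioc (0:ℝ) 1 ∈ 𝓝[>] (0:ℝ) := by
    rw [mem_nhdsWithin]
    exact ⟨Iio 1, isOpen_Iio, by norm_num, fun x hx => ⟨hx.2, le_of_lt hx.1⟩⟩
  exact mem_of_superset this Ioc_subset_Icc_self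

lemma mul_k_tendsto {k : ℝ → ℝ} (hkloc : ∀ a : ℝ, 0 < a → IntegrableOn k (Ioc 0 a))
    (hknn : ∀ s : ℝ, 0 < s → 0 ≤ k s) (hkmono : AntitoneOn k (Ioi 0)) :
    Tendsto (fun ε => ε * k ε) (𝓝[>] (0:ℝ)) (𝓝 0) := by
  set K : ℝ → ℝ := fun x => ∫ t in Ioc 0 x, k t with hK
  have hKt := K_tendsto hkloc
  have hhalf : Tendsto (fun ε : ℝ => K (ε/2)) (𝓝[>] (0:ℝ)) (𝓝 0) := by
    refine hKt.comp ?_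
    refine tendsto_nhdsWithin_iff.2 ⟨?_, ?_⟩
    · exact ((continuous_id.div_const 2).tendsto' 0 0 (by norm_num)).mono_left nhdsWithin_le_nhds
    · filter_upwards [self_mem_nhdsWithin] with x hx
      have hx' : (0:ℝ) < x := hx
      exact mem_Ioi.2 (by linarith)
  have hbound : Tendsto (fun ε : ℝ => 2 * (K ε - K (ε/2))) (𝓝[>] (0:ℝ)) (𝓝 0) := by
    have := (hKt.sub hhalf).const_mul 2
    simpa using this
  refine squeeze_zero' ?_ ?_ hbound
  · filter_upwards [self_mem_nhdsWithin] with ε hε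
    have hε' : 0 < ε := hε
    exact mul_nonneg hε'.le (hknn ε hε')
  · filter_upwards [self_mem_nhdsWithin] with ε hε
    have hε' : (0:ℝ) < ε := hε
    have hsplit : K ε - K (ε/2) = ∫ t in Ioc (ε/2) ε, k t := by
      have hun : Ioc (0:ℝ) (ε/2) ∪ Ioc (ε/2) ε = Ioc 0 ε := Ioc_union_Ioc_eq_Ioc (by positivity) (by linarith)
      have hdisj : Disjoint (Ioc (0:ℝ) (ε/2)) (Ioc (ε/2) ε) := Ioc_disjoint_Ioc_of_le le_rfl
      have h1 : IntegrableOn k (Ioc (0:ℝ) (ε/2)) := hkloc _ (by positivity)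
      have h2 : IntegrableOn k (Ioc (ε/2) ε) := (hkloc ε hε').mono_set (Ioc_subset_Ioc (by positivity) le_rfl)
      have := MeasureTheory.setIntegral_union hdisj measurableSet_Ioc h1 h2
      rw [hun] at this
      simp only [hK, this]; ring
    rw [hsplit]
    have hmono : ∫ t in Ioc (ε/2) ε, (k ε) ≤ ∫ t in Ioc (ε/2) ε, k t := by
      refine setIntegral_mono_on (integrableOn_const measure_Ioc_lt_top.ne) ((hkloc ε hε').mono_set (Ioc_subset_Ioc (by positivity) le_rfl)) measurableSet_Ioc ?_
      intro x hx
      exact hkmono (mem_Ioi.2 (by linarith [hx.1])) (mem_Ioi.2 hε') hx.2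
    have hconst : ∫ t in Ioc (ε/2) ε, (k ε) = (ε/2) * k ε := by
      rw [setIntegral_const]
      rw [Real.volume_real_Ioc]
      rw [max_eq_left (by linarith)]
      simp only [smul_eq_mul]; ring
    nlinarith [hmono, hconst]

lemma keyDeriv {k f : ℝ → ℝ} (hk1 : ContDiffOn ℝ 1 k (Ioi 0))
    (hkloc : ∀ a : ℝ, 0 < a → IntegrableOn k (Ioc 0 a))
    (hf : ContDiff ℝ 1 f) {T t : ℝ} (ht : t ∈ Ioo 0 T) :
    HasDerivAt (fun r => ∫ s in (0:ℝ)..r, k (r - s) * f s)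
      (k t * f 0 + ∫ s in (0:ℝ)..t, k s * deriv f (t - s)) t := by
  obtain ⟨ht0, htT⟩ := ht
  -- rewrite the convolution
  have hrw : ∀ r : ℝ, (∫ s in (0:ℝ)..r, k (r - s) * f s) = ∫ s in (0:ℝ)..r, k s * f (r - s) := by
    intro r
    have := intervalIntegral.integral_comp_sub_left (a := 0) (b := r)
      (fun x => k x * f (r - x)) r
    simp only [sub_sub_cancel, sub_zero, sub_self] at this
    exact this
  simp only [hrw]
  set g : ℝ → ℝ := fun r => ∫ s in (0:ℝ)..r, k s * f (r - s) with hg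
  -- bound on deriv f
  obtain ⟨M, hM⟩ := isCompact_Icc.exists_bound_of_continuousOn
    (s := Icc (-(T+1)) (T+1)) (hf.continuous_deriv le_rfl).continuousOn
  have hMVT : ∀ x ∈ Icc (-(T+1)) (T+1), ∀ y ∈ Icc (-(T+1)) (T+1),
      |f y - f x| ≤ M * |y - x| := by
    intro x hx y hy
    have := (convex_Icc (-(T+1)) (T+1)).norm_image_sub_le_of_norm_hasDerivWithin_le
      (f' := deriv f)
      (fun z hz => ((hf.differentiable one_ne_zero) z).hasDerivAt.hasDerivWithinAt)
      (fun z hz => hM z hz) hx hy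
    simpa [Real.norm_eq_abs] using this
  set U : Set ℝ := Ioo (max (t/2) (t-1)) (t+1) with hU
  have htU : t ∈ U := by
    constructor
    · exact max_lt (by linarith) (by linarith)
    · linarith
  have hUnhds : U ∈ 𝓝 t := isOpen_Ioo.mem_nhds htU
  have hUpos : ∀ r ∈ U, 0 < r := fun r hr => lt_of_le_of_lt (by positivity : (0:ℝ) ≤ t/2)
    (lt_of_le_of_lt (le_max_left _ _) hr.1)
  -- integrability facts
  have iit : IntervalIntegrable (fun s => k s * f (t - s)) volume 0 t :=
    kmul_ii hkloc (hf.continuous.comp (continuous_const.sub continuous_id)) ht0.le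
  have iir : ∀ r ∈ U, IntervalIntegrable (fun s => k s * f (r - s)) volume 0 t :=
    fun r _ => kmul_ii hkloc (hf.continuous.comp (continuous_const.sub continuous_id)) ht0.le
  have hsubIoi : ∀ r ∈ U, uIcc t r ⊆ Ioi 0 := by
    intro r hr x hx
    have h1 := hx.1
    have := lt_min ht0 (hUpos r hr)
    calc (0:ℝ) < min t r := this
    _ ≤ x := h1
  have iimid : ∀ r ∈ U, IntervalIntegrable (fun s => k s * f (r - s)) volume t r := by
    intro r hr
    exact ((hk1.continuousOn.mono (hsubIoi r hr)).mul
      ((hf.continuous.comp (continuous_const.sub continuous_id)).continuousOn)).intervalIntegrable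
  set T1 : ℝ → ℝ := fun r => (∫ s in t..r, k s * f (r - s)) / (r - t) with hT1def
  set T2 : ℝ → ℝ := fun r => ∫ s in (0:ℝ)..t, k s * ((f (r - s) - f (t - s)) / (r - t)) with hT2def
  have hslope : ∀ᶠ r in 𝓝[≠] t, slope g t r = T1 r + T2 r := by
    filter_upwards [nhdsWithin_le_nhds hUnhds, self_mem_nhdsWithin] with r hrU hrne
    have hadd := intervalIntegral.integral_add_adjacent_intervals (iir r hrU) (iimid r hrU)
    have hsub : g r - g t
        = (∫ s in t..r, k s * f (r - s)) + ∫ s in (0:ℝ)..t, (k s * f (r - s) - k s * f (t - s)) := by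
      simp only [hg]
      rw [← hadd, intervalIntegral.integral_sub (iir r hrU) iit]
      ring
    rw [slope_def_field, hsub, add_div]
    congr 1
    rw [hT2def]
    rw [← intervalIntegral.integral_div]
    apply intervalIntegral.integral_congr
    intro x hx
    ring
  -- T2 tendsto
  have hT2 : Tendsto T2 (𝓝[≠] t) (𝓝 (∫ s in (0:ℝ)..t, k s * deriv f (t - s))) := by
    have hioc : ∀ (F : ℝ → ℝ), (∫ s in (0:ℝ)..t, F s) = ∫ s in Ioc 0 t, F s :=
      fun F => intervalIntegral.integral_of_le ht0.le
    rw [hioc]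
    have := MeasureTheory.tendsto_integral_filter_of_dominated_convergence
      (μ := volume.restrict (Ioc 0 t)) (l := 𝓝[≠] t)
      (F := fun r s => k s * ((f (r - s) - f (t - s)) / (r - t)))
      (f := fun s => k s * deriv f (t - s))
      (bound := fun s => |k s| * M)
      ?_ ?_ ?_ ?_
    · exact this.congr (fun r => (hioc _).symm)
    · refine Eventually.of_forall (fun r => ?_)
      exact ((hkloc t ht0).aestronglyMeasurable).mul
        (((hf.continuous.comp (continuous_const.sub continuous_id)).sub
          (hf.continuous.comp (continuous_const.sub continuous_id))).div_const _).aestronglyMeasurable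
    · filter_upwards [eventually_nhdsWithin_of_eventually_nhds hUnhds, self_mem_nhdsWithin]
        with r hrU hrne
      refine (ae_restrict_iff' measurableSet_Ioc).2 (Eventually.of_forall (fun s hs => ?_))
      have hs1 : 0 < s := hs.1
      have hs2 : s ≤ t := hs.2
      have harg1 : t - s ∈ Icc (-(T+1)) (T+1) := by constructor <;> [linarith; linarith]
      have harg2 : r - s ∈ Icc (-(T+1)) (T+1) := by
        obtain ⟨hr1, hr2⟩ := hrU
        have := le_max_right (t/2) (t-1)
        constructor <;> [linarith [lt_of_le_of_lt this hr1]; linarith]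
      have hbd := hMVT _ harg1 _ harg2
      have hrt : r - t ≠ 0 := sub_ne_zero.2 hrne
      rw [Real.norm_eq_abs, abs_mul]
      refine mul_le_mul_of_nonneg_left ?_ (abs_nonneg _)
      rw [abs_div]
      rw [div_le_iff₀ (abs_pos.2 hrt)]
      calc |f (r - s) - f (t - s)| ≤ M * |r - s - (t - s)| := hbd
      _ = M * |r - t| := by ring_nf
    · exact (Integrable.norm (hkloc t ht0)).mul_const M
    · refine Eventually.of_forall (fun s => ?_)
      have hd : HasDerivAt (fun r => f (r - s)) (deriv f (t - s)) t := by
        have := (((hf.differentiable one_ne_zero) (t - s)).hasDerivAt).comp t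
          ((hasDerivAt_id t).sub_const s)
        rw [mul_one] at this; exact this
      have := (hasDerivAt_iff_tendsto_slope.1 hd).const_mul (k s)
      refine this.congr (fun r => ?_)
      rw [slope_def_field]
  -- T1 tendsto
  have hT1 : Tendsto T1 (𝓝[≠] t) (𝓝 (k t * f 0)) := by
    rw [Metric.tendsto_nhdsWithin_nhds]
    intro ε hε
    set D : ℝ := |k t| + |f 0| + 2 with hD
    have hDpos : 0 < D := by positivity
    set ε' : ℝ := min 1 (ε / D) with hε'
    have hε'pos : 0 < ε' := lt_min one_pos (by positivity)
    have hε'D : ε' * D ≤ ε := by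
      calc ε' * D ≤ (ε / D) * D := by
            apply mul_le_mul_of_nonneg_right (min_le_right _ _) hDpos.le
      _ = ε := div_mul_cancel₀ ε hDpos.ne'
    have hkcont : ContinuousAt k t := hk1.continuousOn.continuousAt (isOpen_Ioi.mem_nhds ht0)
    obtain ⟨δ₁, hδ₁pos, hδ₁⟩ := Metric.continuousAt_iff.1 hkcont ε' hε'pos
    obtain ⟨δ₂, hδ₂pos, hδ₂⟩ := Metric.continuousAt_iff.1
      (hf.continuous.continuousAt (x := 0)) ε' hε'pos
    refine ⟨min (min δ₁ (δ₂/2)) (min (t/2) 1), by positivity, ?_⟩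
    intro r hrne hrd
    simp only [Real.dist_eq] at hrd ⊢
    have hrd1 : |r - t| < δ₁ := lt_of_lt_of_le hrd (le_trans (min_le_left _ _) (min_le_left _ _))
    have hrd2 : |r - t| < δ₂/2 := lt_of_lt_of_le hrd (le_trans (min_le_left _ _) (min_le_right _ _))
    have hrdt : |r - t| < t/2 := lt_of_lt_of_le hrd (le_trans (min_le_right _ _) (min_le_left _ _))
    have hrne' : r ≠ t := hrne
    have hrt0 : r - t ≠ 0 := sub_ne_zero.2 hrne'
    have habs : 0 < |r - t| := abs_pos.2 hrt0
    have hrpos : 0 < r := by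
      cases' abs_lt.1 hrdt with h1 h2; linarith
    -- integrand bound on uIoc t r
    have hsubIoi : uIcc t r ⊆ Ioi 0 := fun x hx => lt_of_lt_of_le (lt_min ht0 hrpos) hx.1
    have iiX : IntervalIntegrable (fun s => k s * f (r - s)) volume t r :=
      ((hk1.continuousOn.mono hsubIoi).mul
        ((hf.continuous.comp (continuous_const.sub continuous_id)).continuousOn)).intervalIntegrable
    have hbd : ∀ s ∈ uIoc t r, ‖k s * f (r - s) - k t * f 0‖ ≤ ε' * (D - 1) := by
      intro s hs
      have hsmem : |s - t| ≤ |r - t| := by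
        rcases le_total t r with h | h
        · rw [uIoc_of_le h] at hs
          rw [abs_of_nonneg (by linarith [hs.1.le] : (0:ℝ) ≤ s - t),
              abs_of_nonneg (by linarith : (0:ℝ) ≤ r - t)]
          linarith [hs.2]
        · rw [uIoc_of_ge h] at hs
          rw [abs_of_nonpos (by linarith [hs.2] : s - t ≤ 0),
              abs_of_nonpos (by linarith : r - t ≤ 0)]
          linarith [hs.1]
      have hks : |k s - k t| < ε' := by
        have := hδ₁ (show dist s t < δ₁ by rw [Real.dist_eq]; exact lt_of_le_of_lt hsmem hrd1)
        rwa [Real.dist_eq] at this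
      have hrs : |r - s| < δ₂ := by
        have : |r - s| ≤ |r - t| + |t - s| := by
          calc |r - s| = |(r - t) + (t - s)| := by ring_nf
          _ ≤ |r - t| + |t - s| := abs_add_le _ _
        rw [abs_sub_comm t s] at this
        linarith
      have hfs : |f (r - s) - f 0| < ε' := by
        have := hδ₂ (show dist (r - s) 0 < δ₂ by rw [Real.dist_eq, sub_zero]; exact hrs)
        rwa [Real.dist_eq] at this
      have hfb : |f (r - s)| ≤ |f 0| + ε' := by
        calc |f (r - s)| = |f 0 + (f (r - s) - f 0)| := by ring_nf
        _ ≤ |f 0| + |f (r - s) - f 0| := abs_add_le _ _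
        _ ≤ |f 0| + ε' := by linarith
      have key : k s * f (r - s) - k t * f 0 = (k s - k t) * f (r - s) + k t * (f (r - s) - f 0) := by
        ring
      rw [Real.norm_eq_abs, key]
      calc |(k s - k t) * f (r - s) + k t * (f (r - s) - f 0)|
          ≤ |(k s - k t) * f (r - s)| + |k t * (f (r - s) - f 0)| := abs_add_le _ _
      _ = |k s - k t| * |f (r - s)| + |k t| * |f (r - s) - f 0| := by rw [abs_mul, abs_mul]
      _ ≤ ε' * (|f 0| + ε') + |k t| * ε' := by
          have h1 : |k s - k t| * |f (r - s)| ≤ ε' * (|f 0| + ε') :=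
            mul_le_mul hks.le hfb (abs_nonneg _) hε'pos.le
          have h2 : |k t| * |f (r - s) - f 0| ≤ |k t| * ε' :=
            mul_le_mul_of_nonneg_left hfs.le (abs_nonneg _)
          linarith
      _ ≤ ε' * (D - 1) := by
          have hε'1 : ε' ≤ 1 := min_le_left _ _
          rw [hD]; nlinarith [abs_nonneg (k t), abs_nonneg (f 0)]
    have hnorm := intervalIntegral.norm_integral_le_of_norm_le_const hbd
    have heq : (∫ s in t..r, (k s * f (r - s) - k t * f 0))
        = (∫ s in t..r, k s * f (r - s)) - (r - t) * (k t * f 0) := by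
      rw [intervalIntegral.integral_sub iiX intervalIntegrable_const,
          intervalIntegral.integral_const]
      simp [smul_eq_mul]
    rw [heq] at hnorm
    have : |T1 r - k t * f 0| ≤ ε' * (D - 1) := by
      have hrw2 : T1 r - k t * f 0
          = ((∫ s in t..r, k s * f (r - s)) - (r - t) * (k t * f 0)) / (r - t) := by
        rw [hT1def]
        field_simp
      rw [hrw2, abs_div]
      rw [div_le_iff₀ habs]
      calc |(∫ s in t..r, k s * f (r - s)) - (r - t) * (k t * f 0)|
          ≤ ε' * (D - 1) * |r - t| := hnorm
      _ = ε' * (D - 1) * |r - t| := rfl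
    calc |T1 r - k t * f 0| ≤ ε' * (D - 1) := this
    _ < ε' * D := by nlinarith
    _ ≤ ε := hε'D
  have hslope' : (fun r => T1 r + T2 r) =ᶠ[𝓝[≠] t] slope g t := hslope.mono (fun r hr => hr.symm)
  exact hasDerivAt_iff_tendsto_slope.2 ((hT1.add hT2).congr' hslope')

lemma keyIneq {k : ℝ → ℝ} (hk1 : ContDiffOn ℝ 1 k (Ioi 0))
    (hkloc : ∀ a : ℝ, 0 < a → IntegrableOn k (Ioc 0 a))
    (hknn : ∀ s : ℝ, 0 < s → 0 ≤ k s) (hkmono : AntitoneOn k (Ioi 0))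
    {g : ℝ → ℝ} (hg : ContDiff ℝ 1 g) {t : ℝ} (ht : 0 < t)
    (hgt : g t ≤ 0) (hmin : ∀ r ∈ Icc 0 t, g t ≤ g r) :
    k t * g 0 + (∫ s in (0:ℝ)..t, k s * deriv g (t - s)) ≤ 0 := by
  have hgderiv : Continuous (deriv g) := hg.continuous_deriv le_rfl
  have hcomp : Continuous (fun s : ℝ => deriv g (t - s)) :=
    hgderiv.comp (continuous_const.sub continuous_id)
  -- bound M on |deriv g| over [-(t+1), t+1]
  obtain ⟨M, hM⟩ := isCompact_Icc.exists_bound_of_continuousOn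
    (s := Icc (0:ℝ) t) hgderiv.continuousOn
  have hMnn : 0 ≤ M := le_trans (norm_nonneg _) (hM t (by constructor <;> linarith))
  -- MVT bound for |g(t-ε) - g t| ≤ M ε
  have hMVT : ∀ ε ∈ Ioo (0:ℝ) t, |g (t - ε) - g t| ≤ M * ε := by
    intro ε hε
    have := (convex_Icc (0:ℝ) t).norm_image_sub_le_of_norm_hasDerivWithin_le
      (f' := deriv g)
      (fun z _ => ((hg.differentiable one_ne_zero) z).hasDerivAt.hasDerivWithinAt)
      (fun z hz => hM z hz)
      (show t ∈ Icc (0:ℝ) t by constructor <;> linarith)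
      (show t - ε ∈ Icc (0:ℝ) t by constructor <;> [linarith [hε.2]; linarith [hε.1]])
    rw [Real.norm_eq_abs, Real.norm_eq_abs] at this
    calc |g (t - ε) - g t| ≤ M * |t - ε - t| := this
    _ = M * ε := by rw [show t - ε - t = -ε by ring, abs_neg, abs_of_pos hε.1]
  -- the integrand is interval-integrable on [0,t]
  have ii0t : IntervalIntegrable (fun s => k s * deriv g (t - s)) volume 0 t :=
    kmul_ii hkloc hcomp ht.le
  -- the two functions of ε
  set Φ : ℝ → ℝ := fun ε => ∫ s in ε..t, k s * deriv g (t - s) with hΦ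
  set Ψ : ℝ → ℝ := fun ε => -(k t) * g 0 + k t * g t + k ε * (g (t - ε) - g t) with hΨ
  -- eventual inequality Φ ε ≤ Ψ ε
  have hev : ∀ᶠ ε in 𝓝[>] (0:ℝ), Φ ε ≤ Ψ ε := by
    have hmem : Ioo (0:ℝ) t ∈ 𝓝[>] (0:ℝ) := by
      rw [mem_nhdsWithin]
      exact ⟨Iio t, isOpen_Iio, ht, fun x hx => ⟨hx.2, hx.1⟩⟩
    filter_upwards [hmem] with ε hε
    obtain ⟨hε0, hεt⟩ := hε
    have hsub : uIcc ε t ⊆ Ioi 0 := fun x hx =>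
      lt_of_lt_of_le (lt_min hε0 ht) (by simpa [uIcc] using hx.1)
    -- IBP on [ε, t]
    have hkint : IntervalIntegrable (deriv k) volume ε t := by
      have hcont : ContinuousOn (deriv k) (uIcc ε t) := by
        have := (hk1.continuousOn_deriv_of_isOpen isOpen_Ioi le_rfl)
        exact this.mono hsub
      exact hcont.intervalIntegrable
    have hvder : ∀ x ∈ uIcc ε t, HasDerivAt (fun s => -g (t - s)) (deriv g (t - x)) x := by
      intro x _
      have h0 : HasDerivAt (fun s : ℝ => t - s) (-1) x := by
        simpa using (hasDerivAt_id x).const_sub t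
      have h1 : HasDerivAt (fun s : ℝ => g (t - s)) (deriv g (t - x) * (-1)) x :=
        (((hg.differentiable one_ne_zero) (t - x)).hasDerivAt).comp x h0
      have := h1.neg
      rw [mul_neg_one, neg_neg] at this; exact this
    have hibp := intervalIntegral.integral_mul_deriv_eq_deriv_mul_of_hasDerivAt
      (u := k) (v := fun s => -g (t - s)) (u' := deriv k) (v' := fun s => deriv g (t - s))
      (a := ε) (b := t)
      (hk1.continuousOn.mono hsub)
      (((hg.continuous.comp (continuous_const.sub continuous_id)).neg).continuousOn)
      (fun x hx => k_hasDerivAt hk1 (hsub (Ioo_subset_Icc_self hx)))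
      (fun x hx => hvder x (Ioo_subset_Icc_self (by exact hx)))
      hkint
      (hcomp.continuousOn.intervalIntegrable)
    -- hibp : ∫ k * deriv g (t-·) = k t * (-g 0) - k ε * (-g (t-ε)) - ∫ deriv k * (-g(t-·))
    have hflip : ∀ x, deriv k x * -g (t - x) = -(deriv k x * g (t - x)) := fun x => by ring
    -- bound ∫ deriv k * g(t-·) ≥ ... use deriv k ≤ 0 and g(t-s) ≥ g t
    have hmono2 : ∫ s in ε..t, deriv k s * g (t - s) ≤ ∫ s in ε..t, deriv k s * g t := by
      apply intervalIntegral.integral_mono_on hεt.le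
      · have hcont : ContinuousOn (fun s => deriv k s * g (t - s)) (uIcc ε t) :=
          ((hk1.continuousOn_deriv_of_isOpen isOpen_Ioi le_rfl).mono hsub).mul
            ((hg.continuous.comp (continuous_const.sub continuous_id)).continuousOn)
        exact hcont.intervalIntegrable
      · exact (hkint.mul_const _)
      · intro x hx
        have hx0 : 0 < x := lt_of_lt_of_le hε0 hx.1
        have hdk : deriv k x ≤ 0 := deriv_k_nonpos hk1 hkmono hx0
        have hgx : g t ≤ g (t - x) := hmin _ (by constructor <;> [linarith [hx.2]; linarith [hx.1, hε0]])
        nlinarith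
    have hftc : ∫ s in ε..t, deriv k s * g t = (k t - k ε) * g t := by
      have : ∫ s in ε..t, deriv k s = k t - k ε :=
        intervalIntegral.integral_deriv_eq_sub
          (fun x hx => ((hk1.differentiableOn one_ne_zero) x (hsub hx)).differentiableAt
            (isOpen_Ioi.mem_nhds (hsub hx)))
          hkint
      rw [intervalIntegral.integral_mul_const, this]
    -- combine
    have heq : Φ ε = -(k t) * g 0 + k ε * g (t - ε) + ∫ s in ε..t, deriv k s * g (t - s) := by
      rw [hΦ]
      simp only []
      rw [hibp]
      have : ∫ x in ε..t, deriv k x * -g (t - x) = -∫ x in ε..t, deriv k x * g (t - x) := by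
        rw [← intervalIntegral.integral_neg]
        apply intervalIntegral.integral_congr
        intro x _; ring
      rw [this, sub_neg_eq_add]
      simp only [sub_self]
      ring
    rw [heq, hΨ]
    simp only []
    nlinarith [hmono2, hftc]
  -- limits
  have hΦlim : Tendsto Φ (𝓝[>] (0:ℝ)) (𝓝 (∫ s in (0:ℝ)..t, k s * deriv g (t - s))) := by
    have hdiff : ∀ᶠ ε in 𝓝[>] (0:ℝ),
        (∫ s in (0:ℝ)..t, k s * deriv g (t - s)) - Φ ε = ∫ s in (0:ℝ)..ε, k s * deriv g (t - s) := by
      have hmem : Ioo (0:ℝ) t ∈ 𝓝[>] (0:ℝ) := by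
        rw [mem_nhdsWithin]
        exact ⟨Iio t, isOpen_Iio, ht, fun x hx => ⟨hx.2, hx.1⟩⟩
      filter_upwards [hmem] with ε hε
      have ii1 : IntervalIntegrable (fun s => k s * deriv g (t - s)) volume 0 ε :=
        kmul_ii hkloc hcomp hε.1.le
      have ii2 : IntervalIntegrable (fun s => k s * deriv g (t - s)) volume ε t := by
        have hsub : uIcc ε t ⊆ Ioi 0 := fun x hx =>
          lt_of_lt_of_le (lt_min hε.1 ht) (by simpa [uIcc] using hx.1)
        exact ((hk1.continuousOn.mono hsub).mul hcomp.continuousOn).intervalIntegrable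
      have := intervalIntegral.integral_add_adjacent_intervals ii1 ii2
      rw [hΦ]
      simp only []
      linarith [this]
    have hsmall : Tendsto (fun ε => ∫ s in (0:ℝ)..ε, k s * deriv g (t - s)) (𝓝[>] (0:ℝ)) (𝓝 0) := by
      have hKint : IntegrableOn (fun s => k s * deriv g (t - s)) (Icc 0 t) := by
        rw [integrableOn_Icc_iff_integrableOn_Ioc]
        rw [← intervalIntegrable_iff_integrableOn_Ioc_of_le ht.le]
        exact ii0t
      have hcont2 := continuousOn_primitive (a := 0) (b := t) (μ := volume) hKint
      have h0 : (0:ℝ) ∈ Icc (0:ℝ) t := by constructor <;> linarith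
      have := (hcont2 0 h0).tendsto
      simp only [Ioc_self, MeasureTheory.setIntegral_empty] at this
      have hred : Tendsto (fun x => ∫ s in Ioc 0 x, k s * deriv g (t - s)) (𝓝[>] (0:ℝ)) (𝓝 0) := by
        refine this.mono_left (nhdsWithin_le_of_mem ?_)
        have hm : Ioc (0:ℝ) t ∈ 𝓝[>] (0:ℝ) := by
          rw [mem_nhdsWithin]
          exact ⟨Iio t, isOpen_Iio, ht, fun x hx => ⟨hx.2, hx.1.le⟩⟩
        exact mem_of_superset hm Ioc_subset_Icc_self
      refine hred.congr' ?_
      filter_upwards [self_mem_nhdsWithin] with ε hε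
      rw [intervalIntegral.integral_of_le (le_of_lt hε)]
    have : Tendsto (fun ε => (∫ s in (0:ℝ)..t, k s * deriv g (t - s)) -
        (∫ s in (0:ℝ)..ε, k s * deriv g (t - s))) (𝓝[>] (0:ℝ))
        (𝓝 ((∫ s in (0:ℝ)..t, k s * deriv g (t - s)) - 0)) :=
      tendsto_const_nhds.sub hsmall
    rw [sub_zero] at this
    refine this.congr' ?_
    filter_upwards [hdiff] with ε hε
    linarith [hε]
  have hΨlim : Tendsto Ψ (𝓝[>] (0:ℝ)) (𝓝 (-(k t) * g 0 + k t * g t + 0)) := by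
    refine (tendsto_const_nhds.add ?_)
    have hlast : Tendsto (fun ε => k ε * (g (t - ε) - g t)) (𝓝[>] (0:ℝ)) (𝓝 0) := by
      refine squeeze_zero_norm' (a := fun ε => M * (ε * k ε)) ?_ ?_
      · have hmem : Ioo (0:ℝ) t ∈ 𝓝[>] (0:ℝ) := by
          rw [mem_nhdsWithin]
          exact ⟨Iio t, isOpen_Iio, ht, fun x hx => ⟨hx.2, hx.1⟩⟩
        filter_upwards [hmem] with ε hε
        rw [Real.norm_eq_abs, abs_mul, abs_of_nonneg (hknn ε hε.1)]
        calc k ε * |g (t - ε) - g t| ≤ k ε * (M * ε) :=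
              mul_le_mul_of_nonneg_left (hMVT ε hε) (hknn ε hε.1)
        _ = M * (ε * k ε) := by ring
      · have := (mul_k_tendsto hkloc hknn hkmono).const_mul M
        simpa using this
    exact hlast
  -- conclude
  have hfinal : (∫ s in (0:ℝ)..t, k s * deriv g (t - s)) ≤ -(k t) * g 0 + k t * g t + 0 :=
    le_of_tendsto_of_tendsto hΦlim hΨlim hev
  nlinarith [hfinal, mul_nonpos_of_nonneg_of_nonpos (hknn t ht) hgt]


theorem convexity_inequality_nonlocal (T : ℝ) (hT : 0 < T) (I : Set ℝ) (hI : Convex ℝ I)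
    (k : ℝ → ℝ) (hk1 : ContDiffOn ℝ 1 k (Ioi 0))
    (hkloc : ∀ a : ℝ, 0 < a → IntegrableOn k (Ioc 0 a))
    (hknn : ∀ s : ℝ, 0 < s → 0 ≤ k s)
    (hkmono : AntitoneOn k (Ioi 0))
    (ψ : ℝ → ℝ) (hψ : ContDiff ℝ 1 ψ) (hconv : ConvexOn ℝ I ψ)
    (u : ℝ → ℝ) (hu : ContDiff ℝ (⊤ : ℕ∞) u) (huI : ∀ s ∈ Icc 0 T, u s ∈ I)
    (u₀ : ℝ) (hu₀ : u₀ ∈ I) :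
    ∀ t ∈ Ioo 0 T,
      deriv (fun r => ∫ s in (0 : ℝ)..r, k (r - s) * (ψ (u s) - ψ u₀)) t ≤
        deriv ψ (u t) * deriv (fun r => ∫ s in (0 : ℝ)..r, k (r - s) * (u s - u₀)) t := by
  intro t ht
  obtain ⟨ht0, htT⟩ := ht
  set a : ℝ := deriv ψ (u t) with ha
  have hu1 : ContDiff ℝ 1 u := hu.of_le (by simp)
  have hf1 : ContDiff ℝ 1 (fun s => ψ (u s) - ψ u₀) := (hψ.comp hu1).sub contDiff_const
  have hf2 : ContDiff ℝ 1 (fun s => u s - u₀) := hu1.sub contDiff_const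
  have hd1 := keyDeriv hk1 hkloc hf1 (show t ∈ Ioo 0 T from ⟨ht0, htT⟩)
  have hd2 := keyDeriv hk1 hkloc hf2 (show t ∈ Ioo 0 T from ⟨ht0, htT⟩)
  rw [hd1.deriv, hd2.deriv]
  -- derivative computations
  have hud : ∀ x : ℝ, HasDerivAt u (deriv u x) x :=
    fun x => ((hu1.differentiable one_ne_zero) x).hasDerivAt
  have hψd : ∀ x : ℝ, HasDerivAt ψ (deriv ψ x) x :=
    fun x => ((hψ.differentiable one_ne_zero) x).hasDerivAt
  have hf1d : ∀ x : ℝ, deriv (fun s => ψ (u s) - ψ u₀) x = deriv ψ (u x) * deriv u x := by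
    intro x
    exact (((hψd (u x)).comp x (hud x)).sub_const (ψ u₀)).deriv
  have hf2d : ∀ x : ℝ, deriv (fun s => u s - u₀) x = deriv u x :=
    fun x => ((hud x).sub_const u₀).deriv
  -- continuity of the integrand pieces
  have hc1 : Continuous (fun x : ℝ => deriv ψ (u x) * deriv u x) :=
    ((hψ.continuous_deriv le_rfl).comp hu1.continuous).mul (hu1.continuous_deriv le_rfl)
  have hc2 : Continuous (deriv u) := hu1.continuous_deriv le_rfl
  set P : ℝ := ∫ s in (0:ℝ)..t, k s * (deriv ψ (u (t - s)) * deriv u (t - s)) with hP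
  set Q : ℝ := ∫ s in (0:ℝ)..t, k s * deriv u (t - s) with hQ
  have hPeq : (∫ s in (0:ℝ)..t, k s * deriv (fun s => ψ (u s) - ψ u₀) (t - s)) = P := by
    rw [hP]
    apply intervalIntegral.integral_congr
    intro x _
    simp only [hf1d]
  have hQeq : (∫ s in (0:ℝ)..t, k s * deriv (fun s => u s - u₀) (t - s)) = Q := by
    rw [hQ]
    apply intervalIntegral.integral_congr
    intro x _
    simp only [hf2d]
  rw [hPeq, hQeq]
  -- the Bregman-type function g
  set g : ℝ → ℝ := fun s => ψ (u s) - ψ u₀ - a * (u s - u₀) with hgdef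
  have hgC : ContDiff ℝ 1 g := hf1.sub (contDiff_const.mul hf2)
  have hgd : ∀ x : ℝ, deriv g x = deriv ψ (u x) * deriv u x - a * deriv u x := by
    intro x
    have h1 : HasDerivAt (fun s => ψ (u s) - ψ u₀) (deriv ψ (u x) * deriv u x) x :=
      ((hψd (u x)).comp x (hud x)).sub_const (ψ u₀)
    have h2 : HasDerivAt (fun s => a * (u s - u₀)) (a * deriv u x) x :=
      ((hud x).sub_const u₀).const_mul a
    exact (h1.sub h2).deriv
  have hutI : u t ∈ I := huI t ⟨ht0.le, htT.le⟩
  have hgt : g t ≤ 0 := by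
    have := grad_ineq hconv hψ hutI hu₀
    have hring : deriv ψ (u t) * (u₀ - u t) = -(a * (u t - u₀)) := by rw [ha]; ring
    rw [hring] at this
    simp only [hgdef]
    linarith
  have hmin : ∀ r ∈ Icc 0 t, g t ≤ g r := by
    intro r hr
    have hurI : u r ∈ I := huI r ⟨hr.1, hr.2.trans htT.le⟩
    have := grad_ineq hconv hψ hutI hurI
    have hring : deriv ψ (u t) * (u r - u t) = a * (u r - u₀) - a * (u t - u₀) := by
      rw [ha]; ring
    rw [hring] at this
    simp only [hgdef]
    linarith
  have key := keyIneq hk1 hkloc hknn hkmono hgC ht0 hgt hmin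
  -- rewrite the integral in key
  have hii1 : IntervalIntegrable (fun s => k s * (deriv ψ (u (t - s)) * deriv u (t - s))) volume 0 t :=
    kmul_ii hkloc (hc1.comp (continuous_const.sub continuous_id)) ht0.le
  have hii2 : IntervalIntegrable (fun s => k s * deriv u (t - s)) volume 0 t :=
    kmul_ii hkloc (hc2.comp (continuous_const.sub continuous_id)) ht0.le
  have hsplit : (∫ s in (0:ℝ)..t, k s * deriv g (t - s)) = P - a * Q := by
    have hcong : (∫ s in (0:ℝ)..t, k s * deriv g (t - s))
        = ∫ s in (0:ℝ)..t, (k s * (deriv ψ (u (t - s)) * deriv u (t - s))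
            - a * (k s * deriv u (t - s))) := by
      apply intervalIntegral.integral_congr
      intro x _
      simp only [hgd]
      ring
    rw [hcong, intervalIntegral.integral_sub hii1 (hii2.const_mul a),
      intervalIntegral.integral_const_mul]
  rw [hsplit] at key
  have hg0 : g 0 = ψ (u 0) - ψ u₀ - a * (u 0 - u₀) := rfl
  rw [hg0] at key
  nlinarith [key]
end

section
/- For fixed β ∈ (1,2) and fixed x > 0 with x ≠ 1, the function F(y) = φ(x)^{(β-1)/β} φ(y)^{1/β} - (x^{β-1} y + (1-β)x - y + β-1), where φ(z) = z^β - 1 - β(z-1), satisfies F(x) = 0 and F''(y) > 0 for all y > 0 on the same side of 1 as x (i.e., for y < 1 if x < 1, and y > 1 if x > 1); hence F(y) > 0 for all such y ≠ x. -/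
/-!
With `c = φ(x)^{(β-1)/β}`, `F` is `c φ^{1/β}` minus an affine function, and the affine part is
the tangent line of `c φ^{1/β}` at `x`, so `F(x) = F'(x) = 0`. Differentiating twice gives
`F'' = c (β-1) φ^{1/β-2} (φ(y) y^{β-2} - (y^{β-1}-1)^2)`, and the bracket equals
`y^{β-2} ((β-1) + (2-β) y - y^{2-β})`, which is positive off `y = 1` by Bernoulli's inequality
for the exponent `2-β ∈ (0,1)`. Hence `F` is strictly convex on each side of `1`, and a strictly
convex function has its strict minimum at a critical point.
-/

open Real Set Filter Topology

lemma StrictConvexOn.lt_of_hasDerivAt_eq_zero {S : Set ℝ} {f : ℝ → ℝ} {x y : ℝ}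
    (hf : StrictConvexOn ℝ S f) (hx : x ∈ S) (hy : y ∈ S) (hyx : y ≠ x)
    (hf' : HasDerivAt f 0 x) : f x < f y := by
  rcases hyx.lt_or_gt with hlt | hgt
  · have h := hf.slope_lt_of_hasDerivAt hy hx hlt hf'
    rw [slope_def_field, div_neg_iff] at h
    rcases h with ⟨-, h⟩ | ⟨h, -⟩ <;> linarith
  · have h := hf.lt_slope_of_hasDerivAt hx hy hgt hf'
    rw [slope_def_field, div_pos_iff] at h
    rcases h with ⟨h, -⟩ | ⟨-, h⟩ <;> linarith

/-- The function `φ` of the statement: the Bregman divergence of `t ↦ t ^ β` between `z` and `1`. -/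
noncomputable def bregmanRpow (β z : ℝ) : ℝ := z ^ β - 1 - β * (z - 1)

section bregmanRpow

variable {β y : ℝ}

lemma bregmanRpow_pos (hβ : 1 < β) (hy : 0 ≤ y) (hy1 : y ≠ 1) : 0 < bregmanRpow β y := by
  have h := one_add_mul_self_lt_rpow_one_add (s := y - 1) (by linarith)
    (sub_ne_zero.mpr hy1) hβ
  rw [add_sub_cancel] at h
  rw [bregmanRpow]
  linarith

lemma hasDerivAt_bregmanRpow (hy : 0 < y) :
    HasDerivAt (bregmanRpow β) (β * (y ^ (β - 1) - 1)) y := by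
  have h := ((hasDerivAt_rpow_const (p := β) (Or.inl hy.ne')).sub_const 1).sub
    (((hasDerivAt_id' y).sub_const 1).const_mul β)
  exact h.congr_deriv (by ring)

lemma hasDerivAt_bregmanRpow_rpow_inv (hβ : β ≠ 0) (hy : 0 < y) (hφ : bregmanRpow β y ≠ 0) :
    HasDerivAt (fun t => bregmanRpow β t ^ (1 / β))
      (bregmanRpow β y ^ (1 / β - 1) * (y ^ (β - 1) - 1)) y := by
  refine ((hasDerivAt_bregmanRpow hy).rpow_const (p := 1 / β) (Or.inl hφ)).congr_deriv ?_
  field_simp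

lemma hasDerivAt_bregmanRpow_rpow_inv_deriv (hβ : β ≠ 0) (hy : 0 < y)
    (hφ : 0 < bregmanRpow β y) :
    HasDerivAt (fun t => bregmanRpow β t ^ (1 / β - 1) * (t ^ (β - 1) - 1))
      ((β - 1) * bregmanRpow β y ^ (1 / β - 2) *
        (bregmanRpow β y * y ^ (β - 2) - (y ^ (β - 1) - 1) ^ 2)) y := by
  have hpow : HasDerivAt (fun t : ℝ => t ^ (β - 1) - 1) ((β - 1) * y ^ (β - 2)) y := by
    have h := (hasDerivAt_rpow_const (p := β - 1) (Or.inl hy.ne')).sub_const 1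
    rwa [show β - 1 - 1 = β - 2 by ring] at h
  refine (((hasDerivAt_bregmanRpow hy).rpow_const (p := 1 / β - 1) (Or.inl hφ.ne')).mul
    hpow).congr_deriv ?_
  have hsplit : bregmanRpow β y ^ (1 / β - 1) = bregmanRpow β y ^ (1 / β - 2) * bregmanRpow β y := by
    rw [← rpow_add_one hφ.ne']
    ring_nf
  rw [hsplit, show 1 / β - 1 - 1 = 1 / β - 2 by ring]
  field_simp
  ring

lemma bregmanRpow_mul_rpow_sub_sq (hy : 0 < y) :
    bregmanRpow β y * y ^ (β - 2) - (y ^ (β - 1) - 1) ^ 2 =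
      y ^ (β - 2) * ((β - 1) + (2 - β) * y - y ^ (2 - β)) := by
  have h1 : y ^ (β - 1) = y * y ^ (β - 2) := by
    rw [mul_comm, ← rpow_add_one hy.ne']
    ring_nf
  have h0 : y ^ β = y * y ^ (β - 1) := by
    rw [mul_comm, ← rpow_add_one hy.ne', sub_add_cancel]
  have hinv : y ^ (β - 2) * y ^ (2 - β) = 1 := by
    rw [← rpow_add hy]
    norm_num
  rw [bregmanRpow, h0, h1]
  linear_combination hinv

lemma bregmanRpow_mul_rpow_sub_sq_pos (hβ1 : 1 < β) (hβ2 : β < 2) (hy : 0 < y) (hy1 : y ≠ 1) :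
    0 < bregmanRpow β y * y ^ (β - 2) - (y ^ (β - 1) - 1) ^ 2 := by
  have h := rpow_one_add_lt_one_add_mul_self (s := y - 1) (by linarith)
    (sub_ne_zero.mpr hy1) (p := 2 - β) (by linarith) (by linarith)
  rw [add_sub_cancel] at h
  rw [bregmanRpow_mul_rpow_sub_sq hy]
  exact mul_pos (rpow_pos_of_pos hy _) (by linarith)

end bregmanRpow

section affine

variable {β c a b y : ℝ}

lemma hasDerivAt_mul_bregmanRpow_rpow_inv_sub_affine (hβ : 1 < β) (hy : 0 < y) (hy1 : y ≠ 1) :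
    HasDerivAt (fun t => c * bregmanRpow β t ^ (1 / β) - (a * t + b))
      (c * (bregmanRpow β y ^ (1 / β - 1) * (y ^ (β - 1) - 1)) - a) y := by
  have h := ((hasDerivAt_bregmanRpow_rpow_inv (by linarith) hy
    (bregmanRpow_pos hβ hy.le hy1).ne').const_mul c).sub
      (((hasDerivAt_id' y).const_mul a).add_const b)
  exact h.congr_deriv (by ring)

lemma deriv_deriv_mul_bregmanRpow_rpow_inv_sub_affine (hβ : 1 < β) (hy : 0 < y) (hy1 : y ≠ 1) :
    deriv (deriv fun t => c * bregmanRpow β t ^ (1 / β) - (a * t + b)) y =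
      c * ((β - 1) * bregmanRpow β y ^ (1 / β - 2) *
        (bregmanRpow β y * y ^ (β - 2) - (y ^ (β - 1) - 1) ^ 2)) := by
  have hU : {t : ℝ | 0 < t ∧ t ≠ 1} ∈ 𝓝 y :=
    (isOpen_Ioi.inter isOpen_ne).mem_nhds ⟨hy, hy1⟩
  have hderiv : (deriv fun t => c * bregmanRpow β t ^ (1 / β) - (a * t + b)) =ᶠ[𝓝 y]
      fun t => c * (bregmanRpow β t ^ (1 / β - 1) * (t ^ (β - 1) - 1)) - a := by
    filter_upwards [hU] with t ht
    exact (hasDerivAt_mul_bregmanRpow_rpow_inv_sub_affine hβ ht.1 ht.2).deriv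
  rw [hderiv.deriv_eq]
  exact (((hasDerivAt_bregmanRpow_rpow_inv_deriv (by linarith) hy
    (bregmanRpow_pos hβ hy.le hy1)).const_mul c).sub_const a).deriv

end affine

/-- The function `F` of the statement: `φ(x)^{(β-1)/β} φ^{1/β}` minus its tangent line at `x`. -/
noncomputable def tangentGap (β x : ℝ) : ℝ → ℝ := fun t =>
  bregmanRpow β x ^ ((β - 1) / β) * bregmanRpow β t ^ (1 / β) -
    ((x ^ (β - 1) - 1) * t + ((1 - β) * x + β - 1))

section tangentGap

variable {β x y : ℝ}

lemma tangentGap_self (hβ : 1 < β) (hx : 0 < x) (hx1 : x ≠ 1) : tangentGap β x x = 0 := by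
  have hφx := bregmanRpow_pos hβ hx.le hx1
  have hc : bregmanRpow β x ^ ((β - 1) / β) * bregmanRpow β x ^ (1 / β) = bregmanRpow β x := by
    rw [← rpow_add hφx, ← add_div, sub_add_cancel, div_self (by linarith), rpow_one]
  have hxβ := rpow_add_one hx.ne' (β - 1)
  rw [sub_add_cancel] at hxβ
  rw [tangentGap, hc, bregmanRpow, hxβ]
  ring

lemma hasDerivAt_tangentGap_self (hβ : 1 < β) (hx : 0 < x) (hx1 : x ≠ 1) :
    HasDerivAt (tangentGap β x) 0 x := by
  have hc : bregmanRpow β x ^ ((β - 1) / β) * bregmanRpow β x ^ (1 / β - 1) = 1 := by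
    rw [← rpow_add (bregmanRpow_pos hβ hx.le hx1), ← add_sub_assoc, ← add_div, sub_add_cancel,
      div_self (by linarith), sub_self, rpow_zero]
  exact (hasDerivAt_mul_bregmanRpow_rpow_inv_sub_affine hβ hx hx1).congr_deriv
    (by rw [← mul_assoc, hc]; ring)

lemma deriv_deriv_tangentGap_pos (hβ1 : 1 < β) (hβ2 : β < 2) (hx : 0 < x) (hx1 : x ≠ 1)
    (hy : 0 < y) (hy1 : y ≠ 1) : 0 < deriv (deriv (tangentGap β x)) y := by
  unfold tangentGap
  rw [deriv_deriv_mul_bregmanRpow_rpow_inv_sub_affine hβ1 hy hy1]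
  have hc := rpow_pos_of_pos (bregmanRpow_pos hβ1 hx.le hx1) ((β - 1) / β)
  have hφ := rpow_pos_of_pos (bregmanRpow_pos hβ1 hy.le hy1) (1 / β - 2)
  have hbracket := bregmanRpow_mul_rpow_sub_sq_pos hβ1 hβ2 hy hy1
  exact mul_pos hc (mul_pos (mul_pos (by linarith) hφ) hbracket)

lemma strictConvexOn_tangentGap (hβ1 : 1 < β) (hβ2 : β < 2) (hx : 0 < x) (hx1 : x ≠ 1)
    {S : Set ℝ} (hS : Convex ℝ S) (hS1 : ∀ y ∈ S, 0 < y ∧ y ≠ 1) :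
    StrictConvexOn ℝ S (tangentGap β x) :=
  strictConvexOn_of_deriv2_pos' hS
    (fun y hy => (hasDerivAt_mul_bregmanRpow_rpow_inv_sub_affine hβ1 (hS1 y hy).1
      (hS1 y hy).2).continuousAt.continuousWithinAt)
    (fun y hy => deriv_deriv_tangentGap_pos hβ1 hβ2 hx hx1 (hS1 y hy).1 (hS1 y hy).2)

end tangentGap

lemma exists_convex_side_of_one {x : ℝ} (hx : 0 < x) (hx1 : x ≠ 1) :
    ∃ S : Set ℝ, Convex ℝ S ∧ x ∈ S ∧ (∀ y ∈ S, 0 < y ∧ y ≠ 1) ∧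
      ∀ y, (x < 1 ∧ 0 < y ∧ y < 1) ∨ (1 < x ∧ 1 < y) → y ∈ S := by
  rcases hx1.lt_or_gt with hlt | hgt
  · refine ⟨Ioo 0 1, convex_Ioo 0 1, ⟨hx, hlt⟩, fun y hy => ⟨hy.1, hy.2.ne⟩, ?_⟩
    rintro y (⟨-, hy⟩ | ⟨h, -⟩)
    exacts [hy, absurd hlt h.not_gt]
  · refine ⟨Ioi 1, convex_Ioi 1, hgt, fun y hy => ⟨one_pos.trans hy, hy.ne'⟩, ?_⟩
    rintro y (⟨h, -⟩ | ⟨-, hy⟩)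
    exacts [absurd hgt h.not_gt, hy]

theorem F_convexity_positivity (β : ℝ) (hβ1 : 1 < β) (hβ2 : β < 2)
    (x : ℝ) (hx : 0 < x) (hx1 : x ≠ 1)
    (φ : ℝ → ℝ) (hφ : ∀ z : ℝ, φ z = z ^ β - 1 - β * (z - 1))
    (F : ℝ → ℝ)
    (hF : ∀ y : ℝ, F y = φ x ^ ((β - 1) / β) * φ y ^ (1 / β) -
      (x ^ (β - 1) * y + (1 - β) * x - y + β - 1)) :
    F x = 0 ∧
    (∀ y : ℝ, ((x < 1 ∧ 0 < y ∧ y < 1) ∨ (1 < x ∧ 1 < y)) →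
      0 < deriv (deriv F) y) ∧
    (∀ y : ℝ, ((x < 1 ∧ 0 < y ∧ y < 1) ∨ (1 < x ∧ 1 < y)) → y ≠ x → 0 < F y) := by
  obtain rfl : φ = bregmanRpow β := funext hφ
  obtain rfl : F = tangentGap β x := funext fun t => by rw [hF, tangentGap]; ring
  obtain ⟨S, hSc, hxS, hS1, hmemS⟩ := exists_convex_side_of_one hx hx1
  refine ⟨tangentGap_self hβ1 hx hx1, fun y hy => ?_, fun y hy hyx => ?_⟩
  · obtain ⟨hy0, hy1⟩ := hS1 y (hmemS y hy)
    exact deriv_deriv_tangentGap_pos hβ1 hβ2 hx hx1 hy0 hy1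
  · rw [← tangentGap_self hβ1 hx hx1]
    exact (strictConvexOn_tangentGap hβ1 hβ2 hx hx1 hSc hS1).lt_of_hasDerivAt_eq_zero hxS
      (hmemS y hy) hyx (hasDerivAt_tangentGap_self hβ1 hx hx1)
end
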